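/- Ramanujan's identity: Li₂(−1/8) + Li₂(1/9) = −(1/2)·(log(9/8))². -/

import Mathlib

/-!
Landen's identity `Li₂(x) + Li₂(x / (x - 1)) = -½ log²(1 - x)` on `(-1, 1/2)`, evaluated at
`x = 1/9`. Differentiating the series termwise gives `x · Li₂'(x) = -log(1 - x)`; with this the
left side minus the right side has zero derivative on `(-1, 1/2)`, and it vanishes at `0`.
-/

noncomputable def Li2 (z : ℝ) : ℝ := ∑' n : ℕ, z ^ (n + 1) / ((n : ℝ) + 1) ^ 2

open Real Set

noncomputable def Li2Deriv (x : ℝ) : ℝ := ∑' n : ℕ, x ^ n / ((n : ℝ) + 1)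

lemma Li2_zero : Li2 0 = 0 := by
  simp [Li2]

lemma hasDerivAt_Li2 {x : ℝ} (hx : |x| < 1) : HasDerivAt Li2 (Li2Deriv x) x := by
  obtain ⟨r, hxr, hr⟩ := exists_between hx
  have hx_mem : x ∈ Ioo (-r) r := abs_lt.mp hxr
  have hr₀ : 0 < r := (abs_nonneg x).trans_lt hxr
  unfold Li2 Li2Deriv
  refine hasDerivAt_tsum_of_isPreconnected (u := fun n : ℕ ↦ r ^ n)
    (g := fun n y ↦ y ^ (n + 1) / ((n : ℝ) + 1) ^ 2) (g' := fun n y ↦ y ^ n / ((n : ℝ) + 1))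
    (summable_geometric_of_lt_one hr₀.le hr) isOpen_Ioo isPreconnected_Ioo
    (fun n y _ ↦ ?_) (fun n y hy ↦ ?_) (y₀ := 0) ⟨by linarith, hr₀⟩ ?_ hx_mem
  · refine ((hasDerivAt_pow (n + 1) y).div_const (((n : ℝ) + 1) ^ 2)).congr_deriv ?_
    field_simp
    push_cast
    ring
  · have hyr : |y| ≤ r := (abs_lt.mpr hy).le
    rw [norm_div, norm_pow, Real.norm_eq_abs, Real.norm_eq_abs,
      abs_of_pos (n.cast_add_one_pos : (0 : ℝ) < n + 1)]
    calc |y| ^ n / ((n : ℝ) + 1) ≤ |y| ^ n :=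
          div_le_self (by positivity) (by simp)
      _ ≤ r ^ n := pow_le_pow_left₀ (abs_nonneg y) hyr n
  · simp

lemma mul_Li2Deriv {x : ℝ} (hx : |x| < 1) : x * Li2Deriv x = -log (1 - x) := by
  rw [Li2Deriv, ← tsum_mul_left, ← (hasSum_pow_div_log_of_abs_lt_one hx).tsum_eq]
  congr 1 with n
  ring

lemma hasDerivAt_Li2_add_Li2_div_sub_one_add_log_sq {x : ℝ} (hx : x ∈ Ioo (-1) (1 / 2)) :
    HasDerivAt (fun y ↦ Li2 y + Li2 (y / (y - 1)) + log (1 - y) ^ 2 / 2) 0 x := by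
  obtain ⟨hx₁, hx₂⟩ := hx
  have hx_sub : x - 1 ≠ 0 := by linarith
  have hsub_x : 1 - x ≠ 0 := by linarith
  have hx_abs : |x| < 1 := abs_lt.mpr ⟨hx₁, by linarith⟩
  have hu_abs : |x / (x - 1)| < 1 := by
    rw [abs_div, abs_of_neg (by linarith : x - 1 < 0), div_lt_one (by linarith)]
    exact abs_lt.mpr ⟨by linarith, by linarith⟩
  have hu : HasDerivAt (fun y ↦ y / (y - 1)) (-1 / (x - 1) ^ 2) x := by
    refine ((hasDerivAt_id' x).div ((hasDerivAt_id' x).sub_const 1) hx_sub).congr_deriv ?_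
    ring
  have hlog : HasDerivAt (fun y ↦ log (1 - y) ^ 2 / 2) (-log (1 - x) / (1 - x)) x := by
    refine ((((hasDerivAt_id' x).const_sub 1).log hsub_x).pow 2 |>.div_const 2).congr_deriv ?_
    field_simp
    ring
  refine (((hasDerivAt_Li2 hx_abs).add ((hasDerivAt_Li2 hu_abs).comp x hu)).add
    hlog).congr_deriv ?_
  -- at `x = 0` the two `Li2Deriv 0` terms cancel because `d/dy (y / (y - 1)) = -1` there
  rcases eq_or_ne x 0 with rfl | hx0
  · simp
  have hlog_u : log (1 - x / (x - 1)) = -log (1 - x) := by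
    rw [← log_inv]
    congr 1
    field_simp
    ring
  have h₁ : Li2Deriv x = -log (1 - x) / x := by
    rw [eq_div_iff hx0, mul_comm, mul_Li2Deriv hx_abs]
  have h₂ : Li2Deriv (x / (x - 1)) = log (1 - x) * (x - 1) / x := by
    have := mul_Li2Deriv hu_abs
    rw [hlog_u] at this
    field_simp at this ⊢
    linarith
  rw [h₁, h₂]
  field_simp
  ring

theorem Li2_add_Li2_div_sub_one {x : ℝ} (hx : x ∈ Ioo (-1) (1 / 2)) :
    Li2 x + Li2 (x / (x - 1)) = -(1 / 2) * log (1 - x) ^ 2 := by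
  have hconst := isOpen_Ioo.is_const_of_deriv_eq_zero isPreconnected_Ioo
    (fun y hy ↦
      (hasDerivAt_Li2_add_Li2_div_sub_one_add_log_sq hy).differentiableAt.differentiableWithinAt)
    (fun y hy ↦ (hasDerivAt_Li2_add_Li2_div_sub_one_add_log_sq hy).deriv) hx
    (⟨by norm_num, by norm_num⟩ : (0 : ℝ) ∈ Ioo (-1) (1 / 2))
  simp only [zero_div, zero_sub, Li2_zero, sub_zero, log_one] at hconst
  linarith

theorem ramanujan_li2_eighth :
    Li2 (-(1 / 8)) + Li2 (1 / 9) = -(1 / 2) * Real.log (9 / 8) ^ 2 := by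
  have h := Li2_add_Li2_div_sub_one (x := 1 / 9) ⟨by norm_num, by norm_num⟩
  rw [show (1 : ℝ) / 9 / (1 / 9 - 1) = -(1 / 8) by norm_num,
    show (1 : ℝ) - 1 / 9 = (9 / 8)⁻¹ by norm_num, log_inv, neg_sq] at h
  linarith
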